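/- Let v, w : ℝ² → ℝ² be C² vector fields on the closed annulus Ω = {a ≤ |x| ≤ b} (0 < a < b) satisfying: v·n = w·n = 0 on both boundary circles, ∇×v = ∇×w = 0 on the outer circle |x| = b, and the Navier-slip conditions ν((∇v + (∇v)ᵀ)n)·τ = −α v·τ, ν((∇w + (∇w)ᵀ)n)·τ = −α w·τ on the inner circle |x| = a, with ∇·v = 0. Then −∫_Ω Δv·w dx = ∫_Ω ∇v:∇w dx + ∫_{|x|=a} (a⁻¹ + α/ν)·v_τ·w_τ ds + (1/b)·∫_{|x|=b} v_τ·w_τ ds. -/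

import Mathlib

/-!
Apply the divergence theorem on the annulus to the field `g = (∇v)ᵀ w`, whose components are
`gᵢ = (∂ᵢ v)·w` and whose divergence is `Δv·w + ∇v:∇w`. On the annulus the divergence theorem is
the one for the rectangle `[a, b] × [-π, π]`, pulled back by polar coordinates through the Piola
transform; the sides `θ = ±π` cancel by periodicity.

On a circle of radius `R` the flux density is `(∂_r v)·w = w_τ (∂_r v)·τ`, since `w` is tangent.
Differentiating `v·n = 0` along the circle gives `R (∂_τ v)·n = -v_τ`, which is where the
curvature `1/R` enters. On the outer circle vanishing curl means `(∂_r v)·τ = (∂_τ v)·n`; on the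
inner one the Navier-slip condition reads `ν ((∂_r v)·τ + (∂_τ v)·n) = α v_τ`.
-/

open MeasureTheory Set Real

noncomputable section

def annulus (a b : ℝ) : Set (ℝ × ℝ) :=
  {q | a ^ 2 < q.1 ^ 2 + q.2 ^ 2 ∧ q.1 ^ 2 + q.2 ^ 2 < b ^ 2}

lemma measurableSet_annulus (a b : ℝ) : MeasurableSet (annulus a b) := by
  unfold annulus; measurability

lemma annulus_subset_Icc (a b : ℝ) : annulus a b ⊆ Icc (-|b|, -|b|) (|b|, |b|) := by
  rintro ⟨x, y⟩ ⟨-, h⟩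
  have hx := abs_le_of_sq_le_sq' (a := x) (b := |b|) (by nlinarith [sq_abs b, sq_nonneg y])
    (abs_nonneg b)
  have hy := abs_le_of_sq_le_sq' (a := y) (b := |b|) (by nlinarith [sq_abs b, sq_nonneg x])
    (abs_nonneg b)
  exact ⟨⟨hx.1, hy.1⟩, hx.2, hy.2⟩

lemma Continuous.integrableOn_annulus {f : ℝ × ℝ → ℝ} (hf : Continuous f) (a b : ℝ) :
    IntegrableOn f (annulus a b) :=
  hf.integrableOn_Icc.mono_set (annulus_subset_Icc a b)

lemma polarCoord_symm_sq_add_sq (p : ℝ × ℝ) :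
    (polarCoord.symm p).1 ^ 2 + (polarCoord.symm p).2 ^ 2 = p.1 ^ 2 := by
  simp only [polarCoord_symm_apply]
  linear_combination p.1 ^ 2 * sin_sq_add_cos_sq p.2

lemma sqrt_mul_cos_sq_add_mul_sin_sq {R : ℝ} (hR : 0 ≤ R) (θ : ℝ) :
    √((R * cos θ) ^ 2 + (R * sin θ) ^ 2) = R := by
  rw [show (R * cos θ) ^ 2 + (R * sin θ) ^ 2 = R ^ 2 from polarCoord_symm_sq_add_sq (R, θ),
    sqrt_sq hR]

lemma polarCoord_target_inter_preimage_annulus {a b : ℝ} (ha : 0 ≤ a) (hb : 0 ≤ b) :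
    polarCoord.target ∩ polarCoord.symm ⁻¹' annulus a b = Ioo a b ×ˢ Ioo (-π) π := by
  ext ⟨r, θ⟩
  simp only [polarCoord_target, mem_inter_iff, mem_prod, mem_Ioi, mem_preimage, annulus,
    mem_ofPred_eq, polarCoord_symm_sq_add_sq, mem_Ioo]
  constructor
  · rintro ⟨⟨hr, hθ⟩, hra, hrb⟩
    exact ⟨⟨by nlinarith, by nlinarith⟩, hθ⟩
  · rintro ⟨⟨hra, hrb⟩, hθ⟩
    exact ⟨⟨ha.trans_lt hra, hθ⟩, by nlinarith, by nlinarith⟩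

theorem setIntegral_annulus_eq_polar {a b : ℝ} (ha : 0 ≤ a) (hb : 0 ≤ b) (f : ℝ × ℝ → ℝ) :
    ∫ q in annulus a b, f q = ∫ p in Icc (a, -π) (b, π), p.1 * f (polarCoord.symm p) := by
  rw [← integral_indicator (measurableSet_annulus a b), ← integral_comp_polarCoord_symm]
  simp_rw [smul_eq_mul, ← indicator_comp_right, ← indicator_mul_right]
  rw [setIntegral_indicator
      ((measurableSet_annulus a b).preimage continuous_polarCoord_symm.measurable),
    polarCoord_target_inter_preimage_annulus ha hb, Icc_prod_eq, Measure.volume_eq_prod,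
    Measure.restrict_congr_set (Measure.set_prod_ae_eq Ioo_ae_eq_Icc Ioo_ae_eq_Icc)]
  rfl

@[fun_prop]
lemma differentiable_polarCoord_symm : Differentiable ℝ polarCoord.symm :=
  fun p => (hasFDerivAt_polarCoord_symm p).differentiableAt

lemma fderivPolarCoordSymm_apply (p : ℝ × ℝ) (x y : ℝ) :
    fderivPolarCoordSymm p (x, y) =
      (x * cos p.2 - y * (p.1 * sin p.2), x * sin p.2 + y * (p.1 * cos p.2)) := by
  simp only [fderivPolarCoordSymm, Matrix.toLin_finTwoProd_toContinuousLinearMap, neg_mul,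
    ContinuousLinearMap.prod_apply, add_apply, smul_apply, ContinuousLinearMap.coe_fst',
    smul_eq_mul, ContinuousLinearMap.coe_snd', Prod.mk.injEq]
  constructor <;> ring

lemma ContinuousLinearMap.apply_pair (L : ℝ × ℝ →L[ℝ] ℝ) (x y : ℝ) :
    L (x, y) = x * L (1, 0) + y * L (0, 1) := by
  rw [← smul_eq_mul, ← smul_eq_mul, ← map_smul, ← map_smul, ← map_add]
  simp

/- The Piola transform `r (DΦ)⁻¹ (g ∘ Φ)` of the field `(g₁, g₂)` under `Φ = polarCoord.symm`,
in the components `(r g·e_r, g·e_θ)`; its divergence is `r (div g) ∘ Φ`. -/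
def piolaRadial (g₁ g₂ : ℝ × ℝ → ℝ) (p : ℝ × ℝ) : ℝ :=
  p.1 * (g₁ (polarCoord.symm p) * cos p.2 + g₂ (polarCoord.symm p) * sin p.2)

def piolaAngular (g₁ g₂ : ℝ × ℝ → ℝ) (p : ℝ × ℝ) : ℝ :=
  -(g₁ (polarCoord.symm p) * sin p.2) + g₂ (polarCoord.symm p) * cos p.2

section Piola

variable {g₁ g₂ : ℝ × ℝ → ℝ}

lemma differentiable_piolaRadial (hg₁ : Differentiable ℝ g₁) (hg₂ : Differentiable ℝ g₂) :
    Differentiable ℝ (piolaRadial g₁ g₂) := by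
  unfold piolaRadial; fun_prop

lemma differentiable_piolaAngular (hg₁ : Differentiable ℝ g₁) (hg₂ : Differentiable ℝ g₂) :
    Differentiable ℝ (piolaAngular g₁ g₂) := by
  unfold piolaAngular; fun_prop

lemma hasFDerivAt_comp_polarCoord_symm {f : ℝ × ℝ → ℝ} (hf : Differentiable ℝ f) (p : ℝ × ℝ) :
    HasFDerivAt (fun p => f (polarCoord.symm p))
      ((fderiv ℝ f (polarCoord.symm p)).comp (fderivPolarCoordSymm p)) p :=
  (hf _).hasFDerivAt.comp p (hasFDerivAt_polarCoord_symm p)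

lemma fderiv_piolaRadial_add_fderiv_piolaAngular (hg₁ : Differentiable ℝ g₁)
    (hg₂ : Differentiable ℝ g₂) (p : ℝ × ℝ) :
    fderiv ℝ (piolaRadial g₁ g₂) p (1, 0) + fderiv ℝ (piolaAngular g₁ g₂) p (0, 1) =
      p.1 * (fderiv ℝ g₁ (polarCoord.symm p) (1, 0) + fderiv ℝ g₂ (polarCoord.symm p) (0, 1)) := by
  have hcos : HasFDerivAt (fun p : ℝ × ℝ => cos p.2)
      (-sin p.2 • ContinuousLinearMap.snd ℝ ℝ ℝ) p :=
    (hasDerivAt_cos p.2).comp_hasFDerivAt p hasFDerivAt_snd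
  have hsin : HasFDerivAt (fun p : ℝ × ℝ => sin p.2)
      (cos p.2 • ContinuousLinearMap.snd ℝ ℝ ℝ) p :=
    (hasDerivAt_sin p.2).comp_hasFDerivAt p hasFDerivAt_snd
  have h₁ := hasFDerivAt_comp_polarCoord_symm hg₁ p
  have h₂ := hasFDerivAt_comp_polarCoord_symm hg₂ p
  unfold piolaRadial piolaAngular
  rw [(hasFDerivAt_fst.fun_mul ((h₁.fun_mul hcos).fun_add (h₂.fun_mul hsin))).fderiv,
    (((h₁.fun_mul hsin).fun_neg).fun_add (h₂.fun_mul hcos)).fderiv]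
  simp only [polarCoord_symm_apply, smul_add, add_apply, smul_apply, ContinuousLinearMap.coe_snd',
    smul_eq_mul, mul_zero, ContinuousLinearMap.comp_apply, fderivPolarCoordSymm_apply, one_mul,
    zero_mul, sub_zero, add_zero, zero_add, ContinuousLinearMap.coe_fst', mul_one, neg_add_rev,
    neg_apply, zero_sub, mul_neg]
  rw [ContinuousLinearMap.apply_pair (fderiv ℝ g₁ _) (-(p.1 * sin p.2)),
    ContinuousLinearMap.apply_pair (fderiv ℝ g₂ _) (-(p.1 * sin p.2)),
    ContinuousLinearMap.apply_pair (fderiv ℝ g₁ _) (cos p.2),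
    ContinuousLinearMap.apply_pair (fderiv ℝ g₂ _) (cos p.2)]
  linear_combination p.1 * (fderiv ℝ g₁ (p.1 * cos p.2, p.1 * sin p.2) (1, 0)
        + fderiv ℝ g₂ (p.1 * cos p.2, p.1 * sin p.2) (0, 1)) * sin_sq_add_cos_sq p.2

variable (g₁ g₂)

lemma piolaRadial_periodic (R : ℝ) :
    Function.Periodic (fun θ => piolaRadial g₁ g₂ (R, θ)) (2 * π) := by
  intro θ
  simp [piolaRadial, polarCoord_symm_apply]

lemma piolaAngular_pi_eq_neg_pi (r : ℝ) :
    piolaAngular g₁ g₂ (r, π) = piolaAngular g₁ g₂ (r, -π) := by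
  simp [piolaAngular, polarCoord_symm_apply]

lemma integral_piolaRadial_neg_pi_pi (R : ℝ) :
    ∫ θ in -π..π, piolaRadial g₁ g₂ (R, θ) = ∫ θ in 0..2 * π, piolaRadial g₁ g₂ (R, θ) := by
  simpa [show -π + 2 * π = π by ring] using
    (piolaRadial_periodic g₁ g₂ R).intervalIntegral_add_eq (-π) 0

variable {g₁ g₂}

theorem integral_divergence_annulus {a b : ℝ} (ha : 0 ≤ a) (hab : a ≤ b)
    (hg₁ : ContDiff ℝ 1 g₁) (hg₂ : ContDiff ℝ 1 g₂) :
    ∫ q in annulus a b, (fderiv ℝ g₁ q (1, 0) + fderiv ℝ g₂ q (0, 1)) =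
      (∫ θ in 0..2 * π, piolaRadial g₁ g₂ (b, θ)) - ∫ θ in 0..2 * π, piolaRadial g₁ g₂ (a, θ) := by
  have hd₁ := hg₁.differentiable one_ne_zero
  have hd₂ := hg₂.differentiable one_ne_zero
  have hdiv := fderiv_piolaRadial_add_fderiv_piolaAngular hd₁ hd₂
  have hint : IntegrableOn (fun p => fderiv ℝ (piolaRadial g₁ g₂) p (1, 0)
      + fderiv ℝ (piolaAngular g₁ g₂) p (0, 1)) (Icc (a, -π) (b, π)) := by
    simp_rw [hdiv]
    have := hg₁.continuous_fderiv one_ne_zero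
    have := hg₂.continuous_fderiv one_ne_zero
    exact Continuous.integrableOn_Icc (by fun_prop)
  rw [setIntegral_annulus_eq_polar ha (ha.trans hab),
    ← setIntegral_congr_fun measurableSet_Icc (fun p _ => hdiv p),
    integral_divergence_prod_Icc_of_hasFDerivAt_of_le _ _ _ _ (a, -π) (b, π)
      (Prod.mk_le_mk.2 ⟨hab, by linarith [pi_pos]⟩)
      (differentiable_piolaRadial hd₁ hd₂).continuous.continuousOn
      (differentiable_piolaAngular hd₁ hd₂).continuous.continuousOn
      (fun p _ => (differentiable_piolaRadial hd₁ hd₂ p).hasFDerivAt)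
      (fun p _ => (differentiable_piolaAngular hd₁ hd₂ p).hasFDerivAt) hint]
  simp only [piolaAngular_pi_eq_neg_pi, sub_self, zero_add, integral_piolaRadial_neg_pi_pi]

end Piola

def dirDerivDot (v w : ℝ × ℝ → ℝ × ℝ) (u q : ℝ × ℝ) : ℝ :=
  fderiv ℝ (fun r => (v r).1) q u * (w q).1 + fderiv ℝ (fun r => (v r).2) q u * (w q).2

def laplacianDot (v w : ℝ × ℝ → ℝ × ℝ) (q : ℝ × ℝ) : ℝ :=
  (fderiv ℝ (fun r => fderiv ℝ (fun s => (v s).1) r (1, 0)) q (1, 0)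
      + fderiv ℝ (fun r => fderiv ℝ (fun s => (v s).1) r (0, 1)) q (0, 1)) * (w q).1
    + (fderiv ℝ (fun r => fderiv ℝ (fun s => (v s).2) r (1, 0)) q (1, 0)
      + fderiv ℝ (fun r => fderiv ℝ (fun s => (v s).2) r (0, 1)) q (0, 1)) * (w q).2

def gradInner (v w : ℝ × ℝ → ℝ × ℝ) (q : ℝ × ℝ) : ℝ :=
  fderiv ℝ (fun r => (v r).1) q (1, 0) * fderiv ℝ (fun r => (w r).1) q (1, 0)
    + fderiv ℝ (fun r => (v r).2) q (1, 0) * fderiv ℝ (fun r => (w r).2) q (1, 0)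
    + fderiv ℝ (fun r => (v r).1) q (0, 1) * fderiv ℝ (fun r => (w r).1) q (0, 1)
    + fderiv ℝ (fun r => (v r).2) q (0, 1) * fderiv ℝ (fun r => (w r).2) q (0, 1)

def tangentialComponent (v : ℝ × ℝ → ℝ × ℝ) (R θ : ℝ) : ℝ :=
  -(v (R * cos θ, R * sin θ)).1 * sin θ + (v (R * cos θ, R * sin θ)).2 * cos θ

def TangentOnCircle (v : ℝ × ℝ → ℝ × ℝ) (R : ℝ) : Prop :=
  ∀ q : ℝ × ℝ, √(q.1 ^ 2 + q.2 ^ 2) = R → (v q).1 * q.1 + (v q).2 * q.2 = 0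

def CurlFreeOnCircle (v : ℝ × ℝ → ℝ × ℝ) (R : ℝ) : Prop :=
  ∀ q : ℝ × ℝ, √(q.1 ^ 2 + q.2 ^ 2) = R →
    fderiv ℝ (fun r => (v r).2) q (1, 0) - fderiv ℝ (fun r => (v r).1) q (0, 1) = 0

/- Here `n = -q/R`, the outward normal of the inner boundary of an annulus, and
`τ = (q₂, -q₁)/R`. -/
def NavierSlipOnCircle (ν : ℝ) (α : ℝ × ℝ → ℝ) (v : ℝ × ℝ → ℝ × ℝ) (R : ℝ) : Prop :=
  ∀ q : ℝ × ℝ, √(q.1 ^ 2 + q.2 ^ 2) = R →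
    ν * ((-(q.1 / R)) * ((2 * fderiv ℝ (fun r => (v r).1) q (1, 0)) * (q.2 / R)
            + (fderiv ℝ (fun r => (v r).2) q (1, 0)
              + fderiv ℝ (fun r => (v r).1) q (0, 1)) * (-(q.1 / R)))
        + (-(q.2 / R)) * ((fderiv ℝ (fun r => (v r).1) q (0, 1)
              + fderiv ℝ (fun r => (v r).2) q (1, 0)) * (q.2 / R)
            + (2 * fderiv ℝ (fun r => (v r).2) q (0, 1)) * (-(q.1 / R))))
      = -(α q) * ((v q).1 * (q.2 / R) + (v q).2 * (-(q.1 / R)))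

section VectorFields

variable {v w : ℝ × ℝ → ℝ × ℝ}

lemma contDiff_fderiv_apply {f : ℝ × ℝ → ℝ} (hf : ContDiff ℝ 2 f) (u : ℝ × ℝ) :
    ContDiff ℝ 1 (fun q => fderiv ℝ f q u) :=
  (hf.fderiv_right (by norm_num)).clm_apply contDiff_const

lemma contDiff_dirDerivDot (hv : ContDiff ℝ 2 v) (hw : ContDiff ℝ 1 w) (u : ℝ × ℝ) :
    ContDiff ℝ 1 (dirDerivDot v w u) :=
  ((contDiff_fderiv_apply hv.fst u).mul hw.fst).add ((contDiff_fderiv_apply hv.snd u).mul hw.snd)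

lemma fderiv_dirDerivDot_apply (hv : ContDiff ℝ 2 v) (hw : Differentiable ℝ w)
    (u q u' : ℝ × ℝ) :
    fderiv ℝ (dirDerivDot v w u) q u' =
      fderiv ℝ (fun r => fderiv ℝ (fun s => (v s).1) r u) q u' * (w q).1
        + fderiv ℝ (fun r => (v r).1) q u * fderiv ℝ (fun r => (w r).1) q u'
      + (fderiv ℝ (fun r => fderiv ℝ (fun s => (v s).2) r u) q u' * (w q).2
        + fderiv ℝ (fun r => (v r).2) q u * fderiv ℝ (fun r => (w r).2) q u') := by
  have h₁ := ((contDiff_fderiv_apply hv.fst u).differentiable one_ne_zero q).hasFDerivAt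
  have h₂ := ((contDiff_fderiv_apply hv.snd u).differentiable one_ne_zero q).hasFDerivAt
  unfold dirDerivDot
  rw [((h₁.fun_mul (hw.fst q).hasFDerivAt).fun_add (h₂.fun_mul (hw.snd q).hasFDerivAt)).fderiv]
  simp only [add_apply, smul_apply, smul_eq_mul]
  ring

lemma fderiv_dirDerivDot_add (hv : ContDiff ℝ 2 v) (hw : Differentiable ℝ w) (q : ℝ × ℝ) :
    fderiv ℝ (dirDerivDot v w (1, 0)) q (1, 0) + fderiv ℝ (dirDerivDot v w (0, 1)) q (0, 1) =
      laplacianDot v w q + gradInner v w q := by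
  rw [fderiv_dirDerivDot_apply hv hw, fderiv_dirDerivDot_apply hv hw, laplacianDot, gradInner]
  ring

lemma continuous_laplacianDot (hv : ContDiff ℝ 2 v) (hw : Continuous w) :
    Continuous (laplacianDot v w) := by
  have h (f : ℝ × ℝ → ℝ) (hf : ContDiff ℝ 2 f) (u u' : ℝ × ℝ) :
      Continuous fun q => fderiv ℝ (fun r => fderiv ℝ f r u) q u' :=
    ((contDiff_fderiv_apply hf u).continuous_fderiv one_ne_zero).clm_apply continuous_const
  have := h _ hv.fst (1, 0) (1, 0)
  have := h _ hv.fst (0, 1) (0, 1)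
  have := h _ hv.snd (1, 0) (1, 0)
  have := h _ hv.snd (0, 1) (0, 1)
  unfold laplacianDot
  fun_prop

lemma continuous_gradInner (hv : ContDiff ℝ 1 v) (hw : ContDiff ℝ 1 w) :
    Continuous (gradInner v w) := by
  have h (f : ℝ × ℝ → ℝ) (hf : ContDiff ℝ 1 f) (u : ℝ × ℝ) :
      Continuous fun q => fderiv ℝ f q u :=
    (hf.continuous_fderiv one_ne_zero).clm_apply continuous_const
  have := h _ hv.fst (1, 0)
  have := h _ hv.fst (0, 1)
  have := h _ hv.snd (1, 0)
  have := h _ hv.snd (0, 1)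
  have := h _ hw.fst (1, 0)
  have := h _ hw.fst (0, 1)
  have := h _ hw.snd (1, 0)
  have := h _ hw.snd (0, 1)
  unfold gradInner
  fun_prop

variable {R : ℝ}

lemma TangentOnCircle.apply_circle (h : TangentOnCircle v R) (hR : 0 < R) (θ : ℝ) :
    (v (R * cos θ, R * sin θ)).1 * cos θ + (v (R * cos θ, R * sin θ)).2 * sin θ = 0 := by
  have := h (R * cos θ, R * sin θ) (sqrt_mul_cos_sq_add_mul_sin_sq hR.le θ)
  exact (mul_eq_zero.1 (by linear_combination this : R * _ = 0)).resolve_left hR.ne'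

lemma TangentOnCircle.tangential_deriv (h : TangentOnCircle v R) (hv : Differentiable ℝ v)
    (hR : 0 < R) (θ : ℝ) :
    R * (fderiv ℝ (fun r => (v r).1) (R * cos θ, R * sin θ) (-sin θ, cos θ) * cos θ
        + fderiv ℝ (fun r => (v r).2) (R * cos θ, R * sin θ) (-sin θ, cos θ) * sin θ) =
      -tangentialComponent v R θ := by
  have hpath : HasDerivAt (fun t => (R * cos t, R * sin t)) (R • (-sin θ, cos θ)) θ := by
    simpa using ((hasDerivAt_cos θ).const_mul R).prodMk ((hasDerivAt_sin θ).const_mul R)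
  have hd₁ := (hv.fst _).hasFDerivAt.comp_hasDerivAt θ hpath
  have hd₂ := (hv.snd _).hasFDerivAt.comp_hasDerivAt θ hpath
  have hd := (hd₁.fun_mul (hasDerivAt_cos θ)).fun_add (hd₂.fun_mul (hasDerivAt_sin θ))
  have h0 := hd.unique ((hasDerivAt_const θ (0 : ℝ)).congr_of_eventuallyEq
    (Filter.Eventually.of_forall (h.apply_circle hR)))
  simp only [Function.comp_def, map_smul, smul_eq_mul] at h0
  unfold tangentialComponent
  linear_combination h0

lemma TangentOnCircle.piolaRadial_dirDerivDot (hw : TangentOnCircle w R) (hR : 0 < R) (θ : ℝ) :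
    piolaRadial (dirDerivDot v w (1, 0)) (dirDerivDot v w (0, 1)) (R, θ) =
      R * tangentialComponent w R θ *
        (fderiv ℝ (fun r => (v r).1) (R * cos θ, R * sin θ) (cos θ, sin θ) * -sin θ
          + fderiv ℝ (fun r => (v r).2) (R * cos θ, R * sin θ) (cos θ, sin θ) * cos θ) := by
  have hwt := hw.apply_circle hR θ
  simp only [piolaRadial, dirDerivDot, tangentialComponent, polarCoord_symm_apply,
    ContinuousLinearMap.apply_pair _ (cos θ)]
  set A := fderiv ℝ (fun r => (v r).1) (R * cos θ, R * sin θ)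
  set B := fderiv ℝ (fun r => (v r).2) (R * cos θ, R * sin θ)
  set W := w (R * cos θ, R * sin θ)
  linear_combination R * ((cos θ * A (1, 0) + sin θ * A (0, 1)) * cos θ
      + (cos θ * B (1, 0) + sin θ * B (0, 1)) * sin θ) * hwt
    - R * ((cos θ * A (1, 0) + sin θ * A (0, 1)) * W.1
      + (cos θ * B (1, 0) + sin θ * B (0, 1)) * W.2) * sin_sq_add_cos_sq θ

lemma piolaRadial_dirDerivDot_of_curlFree (hv : Differentiable ℝ v) (hvt : TangentOnCircle v R)
    (hwt : TangentOnCircle w R) (hcurl : CurlFreeOnCircle v R) (hR : 0 < R) (θ : ℝ) :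
    piolaRadial (dirDerivDot v w (1, 0)) (dirDerivDot v w (0, 1)) (R, θ) =
      -(tangentialComponent v R θ * tangentialComponent w R θ) := by
  have hT := hvt.tangential_deriv hv hR θ
  have hc := hcurl (R * cos θ, R * sin θ) (sqrt_mul_cos_sq_add_mul_sin_sq hR.le θ)
  rw [hwt.piolaRadial_dirDerivDot hR]
  simp only [ContinuousLinearMap.apply_pair _ (cos θ),
    ContinuousLinearMap.apply_pair _ (-sin θ)] at hT ⊢
  linear_combination tangentialComponent w R θ * hT
    + R * tangentialComponent w R θ * (sin θ ^ 2 + cos θ ^ 2) * hc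

lemma piolaRadial_dirDerivDot_of_navierSlip {ν : ℝ} {α : ℝ × ℝ → ℝ} (hν : ν ≠ 0)
    (hv : Differentiable ℝ v) (hvt : TangentOnCircle v R) (hwt : TangentOnCircle w R)
    (hslip : NavierSlipOnCircle ν α v R) (hR : 0 < R) (θ : ℝ) :
    piolaRadial (dirDerivDot v w (1, 0)) (dirDerivDot v w (0, 1)) (R, θ) =
      (R⁻¹ + α (R * cos θ, R * sin θ) / ν) * tangentialComponent v R θ
        * tangentialComponent w R θ * R := by
  have hT := hvt.tangential_deriv hv hR θ
  have hs := hslip (R * cos θ, R * sin θ) (sqrt_mul_cos_sq_add_mul_sin_sq hR.le θ)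
  simp only [mul_div_cancel_left₀ _ hR.ne'] at hs
  rw [hwt.piolaRadial_dirDerivDot hR]
  simp only [ContinuousLinearMap.apply_pair _ (cos θ),
    ContinuousLinearMap.apply_pair _ (-sin θ)] at hT ⊢
  set wτ := tangentialComponent w R θ
  unfold tangentialComponent at hT ⊢
  field_simp
  linear_combination R * wτ * hs - ν * wτ * hT

end VectorFields

end

theorem annulus_integration_by_parts_general (a b ν : ℝ) (ha : 0 < a) (hab : a < b)
    (hν : 0 < ν) (α : ℝ × ℝ → ℝ) (v w : ℝ × ℝ → ℝ × ℝ)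
    (hv : ContDiff ℝ 2 v) (hw : ContDiff ℝ 2 w)
    -- tangency on both boundary circles
    (hvn : ∀ q : ℝ × ℝ, Real.sqrt (q.1 ^ 2 + q.2 ^ 2) = a ∨
        Real.sqrt (q.1 ^ 2 + q.2 ^ 2) = b →
      (v q).1 * q.1 + (v q).2 * q.2 = 0)
    (hwn : ∀ q : ℝ × ℝ, Real.sqrt (q.1 ^ 2 + q.2 ^ 2) = a ∨
        Real.sqrt (q.1 ^ 2 + q.2 ^ 2) = b →
      (w q).1 * q.1 + (w q).2 * q.2 = 0)
    -- vanishing curl on the outer circle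
    (hvcurl : ∀ q : ℝ × ℝ, Real.sqrt (q.1 ^ 2 + q.2 ^ 2) = b →
      fderiv ℝ (fun r => (v r).2) q (1, 0) - fderiv ℝ (fun r => (v r).1) q (0, 1) = 0)
    -- Navier-slip condition on the inner circle, with inward normal
    -- n = -(q₁/a, q₂/a) and tangent τ = (q₂/a, -q₁/a)
    (hvslip : ∀ q : ℝ × ℝ, Real.sqrt (q.1 ^ 2 + q.2 ^ 2) = a →
      ν * ((-(q.1 / a)) * ((2 * fderiv ℝ (fun r => (v r).1) q (1, 0)) * (q.2 / a)
              + (fderiv ℝ (fun r => (v r).2) q (1, 0)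
                + fderiv ℝ (fun r => (v r).1) q (0, 1)) * (-(q.1 / a)))
          + (-(q.2 / a)) * ((fderiv ℝ (fun r => (v r).1) q (0, 1)
                + fderiv ℝ (fun r => (v r).2) q (1, 0)) * (q.2 / a)
              + (2 * fderiv ℝ (fun r => (v r).2) q (0, 1)) * (-(q.1 / a))))
        = -(α q) * ((v q).1 * (q.2 / a) + (v q).2 * (-(q.1 / a)))) :
    -(∫ q in {q : ℝ × ℝ | a ^ 2 < q.1 ^ 2 + q.2 ^ 2 ∧ q.1 ^ 2 + q.2 ^ 2 < b ^ 2},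
        ((fderiv ℝ (fun r => fderiv ℝ (fun s => (v s).1) r (1, 0)) q (1, 0)
          + fderiv ℝ (fun r => fderiv ℝ (fun s => (v s).1) r (0, 1)) q (0, 1)) * (w q).1
        + (fderiv ℝ (fun r => fderiv ℝ (fun s => (v s).2) r (1, 0)) q (1, 0)
          + fderiv ℝ (fun r => fderiv ℝ (fun s => (v s).2) r (0, 1)) q (0, 1)) * (w q).2))
      = (∫ q in {q : ℝ × ℝ | a ^ 2 < q.1 ^ 2 + q.2 ^ 2 ∧ q.1 ^ 2 + q.2 ^ 2 < b ^ 2},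
          (fderiv ℝ (fun r => (v r).1) q (1, 0) * fderiv ℝ (fun r => (w r).1) q (1, 0)
          + fderiv ℝ (fun r => (v r).2) q (1, 0) * fderiv ℝ (fun r => (w r).2) q (1, 0)
          + fderiv ℝ (fun r => (v r).1) q (0, 1) * fderiv ℝ (fun r => (w r).1) q (0, 1)
          + fderiv ℝ (fun r => (v r).2) q (0, 1) * fderiv ℝ (fun r => (w r).2) q (0, 1)))
        + (∫ θ in (0:ℝ)..(2 * π),
            (a⁻¹ + α (a * Real.cos θ, a * Real.sin θ) / ν)
            * (-(v (a * Real.cos θ, a * Real.sin θ)).1 * Real.sin θ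
                + (v (a * Real.cos θ, a * Real.sin θ)).2 * Real.cos θ)
            * (-(w (a * Real.cos θ, a * Real.sin θ)).1 * Real.sin θ
                + (w (a * Real.cos θ, a * Real.sin θ)).2 * Real.cos θ) * a)
        + (1 / b) * (∫ θ in (0:ℝ)..(2 * π),
            (-(v (b * Real.cos θ, b * Real.sin θ)).1 * Real.sin θ
                + (v (b * Real.cos θ, b * Real.sin θ)).2 * Real.cos θ)
            * (-(w (b * Real.cos θ, b * Real.sin θ)).1 * Real.sin θ
                + (w (b * Real.cos θ, b * Real.sin θ)).2 * Real.cos θ) * b) := by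
  have hb : 0 < b := ha.trans hab
  have hvd : Differentiable ℝ v := hv.differentiable two_ne_zero
  have hw₁ : ContDiff ℝ 1 w := hw.of_le one_le_two
  have hvta : TangentOnCircle v a := fun q hq => hvn q (Or.inl hq)
  have hvtb : TangentOnCircle v b := fun q hq => hvn q (Or.inr hq)
  have hwta : TangentOnCircle w a := fun q hq => hwn q (Or.inl hq)
  have hwtb : TangentOnCircle w b := fun q hq => hwn q (Or.inr hq)
  have hflux := integral_divergence_annulus ha.le hab.le
    (contDiff_dirDerivDot hv hw₁ (1, 0)) (contDiff_dirDerivDot hv hw₁ (0, 1))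
  rw [setIntegral_congr_fun (measurableSet_annulus a b)
      (fun q _ => fderiv_dirDerivDot_add hv hw₁.differentiable_one q),
    integral_add ((continuous_laplacianDot hv hw.continuous).integrableOn_annulus a b)
      ((continuous_gradInner (hv.of_le one_le_two) hw₁).integrableOn_annulus a b),
    intervalIntegral.integral_congr
      (fun θ _ => piolaRadial_dirDerivDot_of_curlFree hvd hvtb hwtb hvcurl hb θ),
    intervalIntegral.integral_congr
      (fun θ _ => piolaRadial_dirDerivDot_of_navierSlip hν.ne' hvd hvta hwta hvslip ha θ),
    intervalIntegral.integral_neg] at hflux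
  show -(∫ q in annulus a b, laplacianDot v w q) = (∫ q in annulus a b, gradInner v w q)
    + (∫ θ in 0..2 * π, (a⁻¹ + α (a * cos θ, a * sin θ) / ν) * tangentialComponent v a θ
        * tangentialComponent w a θ * a)
    + 1 / b * ∫ θ in 0..2 * π, tangentialComponent v b θ * tangentialComponent w b θ * b
  rw [intervalIntegral.integral_mul_const b, mul_comm _ b, one_div, inv_mul_cancel_left₀ hb.ne']
  linarith

/-- Integration by parts on the annulus `Ω = {a < |x| < b}` for divergence-free
vector fields tangent to the boundary, curl-free on the outer circle, and
satisfying the Navier-slip condition on the inner circle: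
`-∫_Ω Δv·w = ∫_Ω ∇v:∇w + ∫_{|x|=a} (a⁻¹ + α/ν) v_τ w_τ ds + (1/b)∫_{|x|=b} v_τ w_τ ds`,
with the boundary integrals written via arc-length parametrizations. -/
theorem annulus_integration_by_parts (a b ν : ℝ) (ha : 0 < a) (hab : a < b)
    (hν : 0 < ν) (α : ℝ × ℝ → ℝ) (v w : ℝ × ℝ → ℝ × ℝ)
    (hv : ContDiff ℝ 2 v) (hw : ContDiff ℝ 2 w)
    -- tangency on both boundary circles
    (hvn : ∀ q : ℝ × ℝ, Real.sqrt (q.1 ^ 2 + q.2 ^ 2) = a ∨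
        Real.sqrt (q.1 ^ 2 + q.2 ^ 2) = b →
      (v q).1 * q.1 + (v q).2 * q.2 = 0)
    (hwn : ∀ q : ℝ × ℝ, Real.sqrt (q.1 ^ 2 + q.2 ^ 2) = a ∨
        Real.sqrt (q.1 ^ 2 + q.2 ^ 2) = b →
      (w q).1 * q.1 + (w q).2 * q.2 = 0)
    -- vanishing curl on the outer circle
    (hvcurl : ∀ q : ℝ × ℝ, Real.sqrt (q.1 ^ 2 + q.2 ^ 2) = b →
      fderiv ℝ (fun r => (v r).2) q (1, 0) - fderiv ℝ (fun r => (v r).1) q (0, 1) = 0)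
    (hwcurl : ∀ q : ℝ × ℝ, Real.sqrt (q.1 ^ 2 + q.2 ^ 2) = b →
      fderiv ℝ (fun r => (w r).2) q (1, 0) - fderiv ℝ (fun r => (w r).1) q (0, 1) = 0)
    -- Navier-slip condition on the inner circle, with inward normal
    -- n = -(q₁/a, q₂/a) and tangent τ = (q₂/a, -q₁/a)
    (hvslip : ∀ q : ℝ × ℝ, Real.sqrt (q.1 ^ 2 + q.2 ^ 2) = a →
      ν * ((-(q.1 / a)) * ((2 * fderiv ℝ (fun r => (v r).1) q (1, 0)) * (q.2 / a)
              + (fderiv ℝ (fun r => (v r).2) q (1, 0)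
                + fderiv ℝ (fun r => (v r).1) q (0, 1)) * (-(q.1 / a)))
          + (-(q.2 / a)) * ((fderiv ℝ (fun r => (v r).1) q (0, 1)
                + fderiv ℝ (fun r => (v r).2) q (1, 0)) * (q.2 / a)
              + (2 * fderiv ℝ (fun r => (v r).2) q (0, 1)) * (-(q.1 / a))))
        = -(α q) * ((v q).1 * (q.2 / a) + (v q).2 * (-(q.1 / a))))
    (hwslip : ∀ q : ℝ × ℝ, Real.sqrt (q.1 ^ 2 + q.2 ^ 2) = a →
      ν * ((-(q.1 / a)) * ((2 * fderiv ℝ (fun r => (w r).1) q (1, 0)) * (q.2 / a)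
              + (fderiv ℝ (fun r => (w r).2) q (1, 0)
                + fderiv ℝ (fun r => (w r).1) q (0, 1)) * (-(q.1 / a)))
          + (-(q.2 / a)) * ((fderiv ℝ (fun r => (w r).1) q (0, 1)
                + fderiv ℝ (fun r => (w r).2) q (1, 0)) * (q.2 / a)
              + (2 * fderiv ℝ (fun r => (w r).2) q (0, 1)) * (-(q.1 / a))))
        = -(α q) * ((w q).1 * (q.2 / a) + (w q).2 * (-(q.1 / a))))
    -- incompressibility of v
    (hdiv : ∀ q : ℝ × ℝ,
      fderiv ℝ (fun r => (v r).1) q (1, 0) + fderiv ℝ (fun r => (v r).2) q (0, 1) = 0) :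
    -(∫ q in {q : ℝ × ℝ | a ^ 2 < q.1 ^ 2 + q.2 ^ 2 ∧ q.1 ^ 2 + q.2 ^ 2 < b ^ 2},
        ((fderiv ℝ (fun r => fderiv ℝ (fun s => (v s).1) r (1, 0)) q (1, 0)
          + fderiv ℝ (fun r => fderiv ℝ (fun s => (v s).1) r (0, 1)) q (0, 1)) * (w q).1
        + (fderiv ℝ (fun r => fderiv ℝ (fun s => (v s).2) r (1, 0)) q (1, 0)
          + fderiv ℝ (fun r => fderiv ℝ (fun s => (v s).2) r (0, 1)) q (0, 1)) * (w q).2))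
      = (∫ q in {q : ℝ × ℝ | a ^ 2 < q.1 ^ 2 + q.2 ^ 2 ∧ q.1 ^ 2 + q.2 ^ 2 < b ^ 2},
          (fderiv ℝ (fun r => (v r).1) q (1, 0) * fderiv ℝ (fun r => (w r).1) q (1, 0)
          + fderiv ℝ (fun r => (v r).2) q (1, 0) * fderiv ℝ (fun r => (w r).2) q (1, 0)
          + fderiv ℝ (fun r => (v r).1) q (0, 1) * fderiv ℝ (fun r => (w r).1) q (0, 1)
          + fderiv ℝ (fun r => (v r).2) q (0, 1) * fderiv ℝ (fun r => (w r).2) q (0, 1)))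
        + (∫ θ in (0:ℝ)..(2 * π),
            (a⁻¹ + α (a * Real.cos θ, a * Real.sin θ) / ν)
            * (-(v (a * Real.cos θ, a * Real.sin θ)).1 * Real.sin θ
                + (v (a * Real.cos θ, a * Real.sin θ)).2 * Real.cos θ)
            * (-(w (a * Real.cos θ, a * Real.sin θ)).1 * Real.sin θ
                + (w (a * Real.cos θ, a * Real.sin θ)).2 * Real.cos θ) * a)
        + (1 / b) * (∫ θ in (0:ℝ)..(2 * π),
            (-(v (b * Real.cos θ, b * Real.sin θ)).1 * Real.sin θ
                + (v (b * Real.cos θ, b * Real.sin θ)).2 * Real.cos θ)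
            * (-(w (b * Real.cos θ, b * Real.sin θ)).1 * Real.sin θ
                + (w (b * Real.cos θ, b * Real.sin θ)).2 * Real.cos θ) * b) :=
  annulus_integration_by_parts_general a b ν ha hab hν α v w hv hw hvn hwn hvcurl hvslip
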